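/- arXiv:2203.02037 — 8 statements merged into one kernel-verified Lean document; each statement's English description precedes it below -/
import Mathlib

section
/- In the free group FreeGroup α on any type α, no nontrivial element is conjugate to its own inverse: if g : FreeGroup α and g ≠ 1, then ¬ IsConj g g⁻¹. -/
/-!
If `c g c⁻¹ = g⁻¹`, then `c g = g⁻¹ c`, so `(c g)² = c g g⁻¹ c = c²`. In a group with unique
roots (Mathlib's `IsMulTorsionFree`) this forces `c g = c`, i.e. `g = 1`. Free groups have unique
roots, by comparing the cyclic reductions of the reduced words of `x ^ n` and `y ^ n`.
-/

theorem eq_one_of_isConj_inv {G : Type*} [Group G] [IsMulTorsionFree G] {g : G}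
    (h : IsConj g g⁻¹) : g = 1 := by
  obtain ⟨c, hc⟩ := isConj_iff.mp h
  have hsq : (c * g) ^ 2 = c ^ 2 :=
    calc (c * g) ^ 2 = (c * g) * (c * g * c⁻¹ * c) := by rw [sq, inv_mul_cancel_right]
      _ = (c * g) * (g⁻¹ * c) := by rw [hc]
      _ = c ^ 2 := by rw [sq, mul_assoc, mul_inv_cancel_left]
  exact mul_eq_left.mp (IsMulTorsionFree.pow_left_injective two_ne_zero hsq)

/-- In a free group, no nontrivial element is conjugate to its own inverse. -/
theorem freeGroup_not_isConj_inv {α : Type*} (g : FreeGroup α) (hg : g ≠ 1) :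
    ¬ IsConj g g⁻¹ :=
  fun h => hg (eq_one_of_isConj_inv h)
end

section
/- Let w be a nonempty cyclically reduced word over an alphabet α. Then no rotation of w equals the formal inverse of w: if w = r ++ s then s ++ r ≠ w⁻¹. -/
/-- A word over `α` is reduced if it has no two adjacent letters `(x, b)`, `(x, ¬b)`. -/
def Reduced {α : Type*} (w : List (α × Bool)) : Prop :=
  List.Chain' (fun a b => ¬ (a.1 = b.1 ∧ b.2 = !a.2)) w

/-- A word is cyclically reduced if it is reduced and, when nonempty, its last letter and
first letter are not of the form `(x, b)`, `(x, ¬b)`. -/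
def CyclicallyReduced {α : Type*} (w : List (α × Bool)) : Prop :=
  Reduced w ∧ ∀ a ∈ w.getLast?, ∀ b ∈ w.head?, ¬ (a.1 = b.1 ∧ b.2 = !a.2)

/-! Formal inversion reverses a word, so `s ++ r = (r ++ s)⁻¹` splits by length into
`s = s⁻¹` and `r = r⁻¹`, and `r`, `s` are reduced. But a nonempty reduced word is never its own
formal inverse: writing it as `a :: m ++ [b]` forces `a = b⁻¹` and `m = m⁻¹`, and peeling off the
outer letters ends at a single letter equal to its own inverse or at two adjacent cancelling
letters. -/

open FreeGroup

theorem Reduced.eq_nil_of_eq_invRev {α : Type*} {w : List (α × Bool)} (hw : Reduced w)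
    (hinv : w = invRev w) : w = [] := by
  induction w using List.bidirectionalRec with
  | nil => rfl
  | singleton a =>
    have := congrArg Prod.snd (List.singleton_inj.mp hinv)
    simp at this
  | cons_append a m b ih =>
    have hsplit : a :: (m ++ [b]) = (b.1, !b.2) :: (invRev m ++ [(a.1, !a.2)]) := by
      simpa [invRev] using hinv
    obtain ⟨hab, htail⟩ := List.cons_eq_cons.mp hsplit
    have hm : m = invRev m := (List.append_inj htail invRev_length.symm).1
    obtain rfl : m = [] := ih (hw.infix ⟨[a], [b], rfl⟩) hm
    have hcancel := (List.isChain_cons_cons.mp hw).1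
    simp [hab] at hcancel

theorem eq_invRev_of_append_eq_invRev {α : Type*} {r s : List (α × Bool)}
    (h : s ++ r = invRev (r ++ s)) : s = invRev s ∧ r = invRev r := by
  rw [invRev_append] at h
  exact List.append_inj h invRev_length.symm

/-- No rotation of a nonempty cyclically reduced word equals its formal inverse. -/
theorem rotation_ne_invRev {α : Type*} (w : List (α × Bool))
    (hw : CyclicallyReduced w) (hne : w ≠ [])
    (r s : List (α × Bool)) (h : w = r ++ s) :
    s ++ r ≠ FreeGroup.invRev w := by
  intro hrot
  subst h
  obtain ⟨hs, hr⟩ := eq_invRev_of_append_eq_invRev hrot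
  have hr_nil := Reduced.eq_nil_of_eq_invRev hw.1.left_of_append hr
  have hs_nil := Reduced.eq_nil_of_eq_invRev hw.1.right_of_append hs
  exact hne (by rw [hr_nil, hs_nil, List.append_nil])
end

section
/- Let g and h be elements of the free group FreeGroup α whose reduced words are cyclically reduced. Then g and h are conjugate (IsConj g h) if and only if the reduced word of h is a rotation of the reduced word of g. -/
theorem List.isRotated_iff_exists_append {α : Type*} {l l' : List α} :
    l ~r l' ↔ ∃ r s, l = r ++ s ∧ l' = s ++ r := by
  constructor
  · rw [isRotated_iff_mod]
    rintro ⟨n, hn, rfl⟩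
    exact ⟨l.take n, l.drop n, (take_append_drop n l).symm, rotate_eq_drop_append_take hn⟩
  · rintro ⟨r, s, rfl, rfl⟩
    exact isRotated_append

namespace FreeGroup

open List

variable {α : Type*} {L c w : List (α × Bool)}

theorem not_cancels_iff {x y : α × Bool} :
    ¬ (x.1 = y.1 ∧ y.2 = !x.2) ↔ (x.1 = y.1 → x.2 = y.2) := by
  cases x.2 <;> cases y.2 <;> simp

theorem reduced_iff_isReduced : Reduced L ↔ IsReduced L :=
  IsChain.iff fun _ _ ↦ not_cancels_iff

theorem cyclicallyReduced_iff_isCyclicallyReduced :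
    CyclicallyReduced L ↔ IsCyclicallyReduced L := by
  simp only [CyclicallyReduced, IsCyclicallyReduced, reduced_iff_isReduced, not_cancels_iff]

theorem isCyclicallyReduced_iff_isReduced_append_self :
    IsCyclicallyReduced L ↔ IsReduced (L ++ L) := by
  rw [IsReduced, isChain_append, ← IsReduced, and_self_left, isCyclicallyReduced_iff]

theorem IsCyclicallyReduced.of_isRotated {L' : List (α × Bool)} (h : IsCyclicallyReduced L)
    (hr : L ~r L') : IsCyclicallyReduced L' := by
  obtain ⟨r, s, rfl, rfl⟩ := isRotated_iff_exists_append.1 hr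
  rw [isCyclicallyReduced_iff_isReduced_append_self]
  exact (h.flatten_replicate 3).isReduced.infix ⟨r, s, by simp⟩

theorem eq_nil_of_isCyclicallyReduced_append_invRev
    (h : IsCyclicallyReduced (c ++ w ++ invRev c)) : c = [] := by
  obtain _ | ⟨y, c⟩ := c
  · rfl
  · have := h.2 (y.1, !y.2) (by simp [invRev, getLast?_cons]) y (by simp)
    simp at this

theorem ne_mk_not_iff {a : α} {b : Bool} {y : α × Bool} :
    y ≠ (a, !b) ↔ (a = y.1 → b = y.2) := by
  obtain ⟨y₁, y₂⟩ := y
  cases b <;> cases y₂ <;> simp [eq_comm]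

theorem IsReduced.cons_append_inv {a : α} {b : Bool} (hL : IsReduced L) (hne : L ≠ [])
    (hhead : ∀ y ∈ L.head?, y ≠ (a, !b)) (hlast : ∀ y ∈ L.getLast?, y ≠ (a, b)) :
    IsReduced ((a, b) :: L ++ [(a, !b)]) := by
  have hcons : IsReduced ([(a, b)] ++ L) :=
    isChain_cons.2 ⟨fun y hy ↦ ne_mk_not_iff.1 (hhead y hy), hL⟩
  have hconcat : IsReduced (L ++ [(a, !b)]) := by
    refine isChain_append.2 ⟨hL, isChain_singleton _, fun x hx y hy ↦ ?_⟩
    obtain rfl : y = (a, !b) := by simpa using hy.symm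
    have := ne_mk_not_iff (b := !b).1 (by simpa using hlast x hx)
    exact fun h ↦ (this h.symm).symm
  exact hcons.append_overlap hconcat hne

variable [DecidableEq α]

theorem isConj_of_toWord_isRotated {g h : FreeGroup α} (hr : g.toWord ~r h.toWord) :
    IsConj g h := by
  obtain ⟨r, s, hg, hh⟩ := isRotated_iff_exists_append.1 hr
  rw [← mk_toWord (x := g), ← mk_toWord (x := h), hg, hh, ← mul_mk, ← mul_mk]
  exact isConj_iff.2 ⟨mk s, by group⟩

theorem IsCyclicallyReduced.exists_reduce_conj_letter (hw : IsCyclicallyReduced w)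
    (a : α) (b : Bool) :
    ∃ c' w', w ~r w' ∧ reduce ((a, b) :: w ++ [(a, !b)]) = c' ++ w' ++ invRev c' := by
  by_cases hhead : w.head? = some (a, !b)
  · obtain ⟨t, rfl⟩ := head?_eq_some_iff.1 hhead
    have hr : (a, !b) :: t ~r t ++ [(a, !b)] := IsRotated.cons_append_singleton
    refine ⟨[], t ++ [(a, !b)], hr, ?_⟩
    rw [cons_append, cons_append, reduce.Step.eq Red.Step.cons_not,
      (hw.of_isRotated hr).isReduced.reduce_eq]
    simp
  by_cases hlast : w.getLast? = some (a, b)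
  · obtain ⟨t, rfl⟩ := getLast?_eq_some_iff.1 hlast
    have hr : t ++ [(a, b)] ~r (a, b) :: t := isRotated_concat _ _
    refine ⟨[], (a, b) :: t, hr, ?_⟩
    have hcancel :
        (a, b) :: (t ++ [(a, b)]) ++ [(a, !b)] = (a, b) :: t ++ (a, b) :: (a, !b) :: [] := by
      simp
    rw [hcancel, reduce.Step.eq Red.Step.not, append_nil,
      (hw.of_isRotated hr).isReduced.reduce_eq]
    simp
  obtain rfl | hne := eq_or_ne w []
  · exact ⟨[], [], .refl _, reduce.Step.eq Red.Step.cons_not⟩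
  · refine ⟨[(a, b)], w, .refl w, ?_⟩
    rw [(hw.isReduced.cons_append_inv hne (by rintro _ h rfl; exact hhead h)
      (by rintro _ h rfl; exact hlast h)).reduce_eq]
    simp [invRev]

theorem IsCyclicallyReduced.exists_reduce_conj_letter_append_invRev
    (hw : IsCyclicallyReduced w) (hL : IsReduced (c ++ w ++ invRev c)) (a : α) (b : Bool) :
    ∃ c' w', w ~r w' ∧
      reduce ((a, b) :: (c ++ w ++ invRev c) ++ [(a, !b)]) = c' ++ w' ++ invRev c' := by
  obtain _ | ⟨y, c⟩ := c
  · simpa using hw.exists_reduce_conj_letter a b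
  have hshape : y :: c ++ w ++ invRev (y :: c) = y :: (c ++ w ++ invRev c) ++ [(y.1, !y.2)] := by
    simp [invRev]
  by_cases hy : y = (a, !b)
  · subst hy
    refine ⟨c, w, .refl w, ?_⟩
    have hcancel : (a, b) :: ((a, !b) :: (c ++ w ++ invRev c) ++ [(a, !!b)]) ++ [(a, !b)] =
        (a, b) :: (a, !b) :: (c ++ w ++ invRev c ++ (a, b) :: (a, !b) :: []) := by
      simp
    rw [hshape, hcancel, reduce.Step.eq Red.Step.cons_not, reduce.Step.eq Red.Step.not,
      append_nil, (hL.infix ⟨[(a, !b)], [(a, b)], by rw [hshape]; simp⟩).reduce_eq]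
  · refine ⟨(a, b) :: y :: c, w, .refl w, ?_⟩
    have hlast : ∀ z ∈ (y :: c ++ w ++ invRev (y :: c)).getLast?, z ≠ (a, b) := by
      rw [hshape, getLast?_concat]
      rintro _ ⟨⟩ h
      obtain ⟨rfl, rfl⟩ := Prod.mk.inj h
      simp at hy
    rw [(hL.cons_append_inv (by simp) (by simpa using hy) hlast).reduce_eq]
    simp [invRev]

theorem IsCyclicallyReduced.exists_toWord_conj_eq {g : FreeGroup α}
    (hg : IsCyclicallyReduced g.toWord) (u : FreeGroup α) :
    ∃ c w, g.toWord ~r w ∧ (u * g * u⁻¹).toWord = c ++ w ++ invRev c := by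
  rw [← mk_toWord (x := u)]
  induction u.toWord with
  | nil => exact ⟨[], g.toWord, .refl _, by simp [← one_eq_mk]⟩
  | cons x L ih =>
    obtain ⟨c, w, hr, hword⟩ := ih
    obtain ⟨c', w', hr', hreduce⟩ :=
      (hg.of_isRotated hr).exists_reduce_conj_letter_append_invRev
        (hword ▸ isReduced_toWord) x.1 x.2
    refine ⟨c', w', hr.trans hr', ?_⟩
    have hinv : mk [(x.1, !x.2)] = (mk [x])⁻¹ := by simp [inv_mk, invRev]
    have hconj : mk ((x.1, x.2) :: (mk L * g * (mk L)⁻¹).toWord ++ [(x.1, !x.2)]) =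
        mk (x :: L) * g * (mk (x :: L))⁻¹ := by
      rw [← mul_mk, ← singleton_append, ← mul_mk, mk_toWord, hinv,
        ← singleton_append (l := L), ← mul_mk]
      group
    rw [← hconj, toWord_mk, hword, hreduce]

end FreeGroup

/-- Two elements of a free group with cyclically reduced words are conjugate iff
the reduced word of one is a rotation of the reduced word of the other. -/
theorem isConj_iff_rotation {α : Type*} [DecidableEq α] (g h : FreeGroup α)
    (hg : CyclicallyReduced g.toWord) (hh : CyclicallyReduced h.toWord) :
    IsConj g h ↔ ∃ r s : List (α × Bool), g.toWord = r ++ s ∧ h.toWord = s ++ r := by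
  open FreeGroup in
  rw [cyclicallyReduced_iff_isCyclicallyReduced] at hg hh
  rw [← List.isRotated_iff_exists_append]
  refine ⟨fun hconj ↦ ?_, isConj_of_toWord_isRotated⟩
  obtain ⟨u, rfl⟩ := isConj_iff.1 hconj
  obtain ⟨c, w, hr, hword⟩ := hg.exists_toWord_conj_eq u
  obtain rfl : c = [] := eq_nil_of_isCyclicallyReduced_append_invRev (hword ▸ hh)
  simpa [hword] using hr
end

section
/- Let γ be a reduced word over an alphabet α. If γ = a ++ b and the formal inverse γ⁻¹ = b ++ c for some words a, b, c, then b is empty. In other words, a reduced word and its formal inverse cannot overlap: no nonempty final segment of γ is an initial segment of γ⁻¹. -/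
theorem reduced_iff_isReduced {α : Type*} {w : List (α × Bool)} :
    Reduced w ↔ FreeGroup.IsReduced w := by
  unfold Reduced FreeGroup.IsReduced
  congr! 3 with x y
  cases x.2 <;> cases y.2 <;> simp

namespace FreeGroup

variable {α : Type*}

theorem invRev_singleton (x : α × Bool) : invRev [x] = [(x.1, !x.2)] := rfl

theorem IsReduced.eq_nil_of_invRev_eq_self {w : List (α × Bool)}
    (hw : IsReduced w) (h : invRev w = w) : w = [] := by
  induction w using List.bidirectionalRec with
  | nil => rfl
  | singleton x => simp [invRev_singleton, Prod.ext_iff] at h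
  | cons_append x m y ih =>
    rw [invRev_cons, invRev_append, invRev_singleton, invRev_singleton, List.append_assoc,
      List.singleton_append, List.cons.injEq] at h
    obtain ⟨hyx, hm⟩ := h
    obtain rfl : m = [] :=
      ih (hw.infix ⟨[x], [y], rfl⟩) (List.append_inj_left' hm (by simp))
    rw [← hyx] at hw
    simp [IsReduced] at hw

theorem IsReduced.eq_nil_of_invRev_eq_append {a b c : List (α × Bool)}
    (hred : IsReduced (a ++ b)) (h : invRev (a ++ b) = b ++ c) : b = [] := by
  rw [invRev_append] at h
  exact (hred.infix (List.suffix_append a b).isInfix).eq_nil_of_invRev_eq_self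
    (List.append_inj_left h invRev_length)

end FreeGroup

/-- A reduced word and its formal inverse cannot overlap: no nonempty final segment of `γ`
is an initial segment of `γ⁻¹`. -/
theorem reduced_no_overlap_invRev {α : Type*} (γ a b c : List (α × Bool))
    (hred : Reduced γ) (h1 : γ = a ++ b) (h2 : FreeGroup.invRev γ = b ++ c) :
    b = [] := by
  subst h1
  exact (reduced_iff_isReduced.1 hred).eq_nil_of_invRev_eq_append h2
end

section
/- Let w be a reduced word over an alphabet α and let γ be a nonempty word such that w = u ++ γ ++ v and w = u' ++ γ⁻¹ ++ v' for some words u, v, u', v'. Then the two occurrences are disjoint and not adjacent: either |u| + |γ| < |u'| or |u'| + |γ| < |u| (where |·| denotes the length of a word). -/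
open FreeGroup

section

variable {α : Type*}

theorem Reduced.infix {w z : List (α × Bool)} (hw : Reduced w) (h : z <:+: w) : Reduced z :=
  List.IsChain.infix hw h

theorem Reduced.invRev_ne_self {z : List (α × Bool)} (hz : Reduced z) (hne : z ≠ []) :
    invRev z ≠ z := by
  intro hinv
  have hmirror : ∀ i (hi : i < z.length),
      z[i] = (z[z.length - 1 - i].1, !z[z.length - 1 - i].2) := by
    intro i hi
    rw [List.getElem_of_eq hinv.symm hi]
    simp [invRev, List.getElem_reverse]
  rw [Reduced, List.Chain', List.isChain_iff_getElem] at hz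
  obtain ⟨k, hk | hk⟩ := Nat.even_or_odd' z.length
  · obtain ⟨j, rfl⟩ : ∃ j, k = j + 1 :=
      Nat.exists_eq_succ_of_ne_zero (by rintro rfl; exact hne (List.length_eq_zero_iff.mp hk))
    have h := hmirror (j + 1) (by omega)
    simp only [show z.length - 1 - (j + 1) = j by omega] at h
    exact hz j (by omega) (by simp [h])
  · have h := congrArg Prod.snd (hmirror k (by omega))
    simp only [show z.length - 1 - k = k by omega] at h
    exact Bool.eq_not_self _ |>.mp h

theorem exists_invRev_eq_of_overlap {u γ v u' v' : List (α × Bool)}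
    (h : u ++ γ ++ v = u' ++ invRev γ ++ v')
    (hle : u.length ≤ u'.length) (hle' : u'.length ≤ u.length + γ.length) :
    ∃ x y, γ = x ++ y ∧ invRev y = y ∧ v = invRev x ++ v' := by
  obtain ⟨x, rfl⟩ : u <+: u' :=
    List.prefix_of_prefix_length_le (l₃ := u ++ γ ++ v) ⟨γ ++ v, by simp⟩
      ⟨invRev γ ++ v', by simp [h]⟩ hle
  obtain ⟨y, rfl⟩ : x <+: γ := by
    rw [← List.prefix_append_right_inj u]
    exact List.prefix_of_prefix_length_le (l₃ := u ++ γ ++ v) ⟨invRev γ ++ v', by simp [h]⟩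
      ⟨v, by simp⟩ (by simpa using hle')
  simp only [invRev_append, List.append_assoc, List.append_cancel_left_eq] at h
  obtain ⟨hy, hv⟩ := List.append_inj h (by simp)
  exact ⟨x, y, rfl, hy.symm, hv⟩

theorem Reduced.length_add_lt_of_invRev_occurrence {u γ v u' v' : List (α × Bool)}
    (hred : Reduced (u ++ γ ++ v)) (hγ : γ ≠ [])
    (h : u ++ γ ++ v = u' ++ invRev γ ++ v') (hle : u.length ≤ u'.length) :
    u.length + γ.length < u'.length := by
  by_contra! hle'
  obtain ⟨x, y, rfl, hy, rfl⟩ := exists_invRev_eq_of_overlap h hle hle'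
  have hinfix : x ++ y ++ invRev x <:+: u ++ (x ++ y) ++ (invRev x ++ v') := ⟨u, v', by simp⟩
  exact (hred.infix hinfix).invRev_ne_self (List.append_ne_nil_of_left_ne_nil hγ _) (by simp [hy])

end

/-- In a reduced word, an occurrence of a nonempty word `γ` and an occurrence of its
formal inverse `γ⁻¹` are disjoint and not adjacent. -/
theorem occurrences_of_inv_disjoint {α : Type*} (w γ u v u' v' : List (α × Bool))
    (hred : Reduced w) (hγ : γ ≠ [])
    (h1 : w = u ++ γ ++ v) (h2 : w = u' ++ FreeGroup.invRev γ ++ v') :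
    u.length + γ.length < u'.length ∨ u'.length + γ.length < u.length := by
  subst h1
  rcases le_total u.length u'.length with hle | hle
  · exact Or.inl (hred.length_add_lt_of_invRev_occurrence hγ h2 hle)
  · right
    rw [h2] at hred
    simpa using hred.length_add_lt_of_invRev_occurrence (by simpa using invRev_injective.ne hγ)
      (by rw [invRev_invRev, h2]) hle
end

section
/- Let G be a simple graph on a vertex type V that is a tree (connected with no cycles). Let n ≥ 2 and let A, B₁, …, Bₙ ⊆ V be sets of vertices, each inducing a connected subgraph of G, such that: A ∩ B₁ ≠ ∅, A ∩ Bₙ ≠ ∅, A ∩ Bᵢ = ∅ for all 1 < i < n, and Bᵢ ∩ Bᵢ₊₁ ≠ ∅ for all 1 ≤ i < n. Then B₁ ∩ Bₙ ≠ ∅. -/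
/-!
Connected vertex sets of a forest are convex: they contain the unique path between any two of
their points. Hence three pairwise intersecting connected sets have a common point (the Helly
property of subtrees): otherwise the path joining `Y ∩ Z` to `X ∩ Z` inside `Z` would run through
`X ∪ Y` and cross from `Y \ X` to `X \ Y` along an edge, and that edge would be a bridge whose
endpoints are also joined through `X ∩ Y`. Apply this to `A`, `B 1` and the connected union
`B 2 ∪ ⋯ ∪ B n`: a common point lies in `A`, so in none of the intermediate sets, so in `B n`.
-/

namespace SimpleGraph

variable {V : Type*} {G : SimpleGraph V}

lemma exists_walk_support_subset_of_preconnected_induce {S : Set V}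
    (hS : (G.induce S).Preconnected) {u v : V} (hu : u ∈ S) (hv : v ∈ S) :
    ∃ w : G.Walk u v, ∀ t ∈ w.support, t ∈ S := by
  obtain ⟨w⟩ := hS ⟨u, hu⟩ ⟨v, hv⟩
  refine ⟨w.map (Embedding.induce S).toHom, fun t ht => ?_⟩
  obtain ⟨s, -, rfl⟩ := List.mem_map.mp (Walk.support_map _ w ▸ ht)
  exact s.2

lemma IsAcyclic.support_subset_of_preconnected_induce (hG : G.IsAcyclic) {S : Set V}
    (hS : (G.induce S).Preconnected) {u v : V} (hu : u ∈ S) (hv : v ∈ S) (p : G.Path u v) :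
    ∀ t ∈ (p : G.Walk u v).support, t ∈ S := by
  classical
  obtain ⟨w, hw⟩ := exists_walk_support_subset_of_preconnected_induce hS hu hv
  rw [(hG.subsingleton_path u v).elim p w.toPath]
  exact fun t ht => hw t (w.support_toPath_subset_support ht)

lemma IsAcyclic.mem_edges_of_adj (hG : G.IsAcyclic) {u v : V} (huv : G.Adj u v)
    (w : G.Walk u v) : s(u, v) ∈ w.edges :=
  isBridge_iff_forall_walk_mem_edges.mp (isAcyclic_iff_forall_adj_isBridge.mp hG huv) w

lemma IsAcyclic.mem_or_mem_of_adj (hG : G.IsAcyclic) {S T : Set V}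
    (hS : (G.induce S).Preconnected) (hT : (G.induce T).Preconnected) (hST : (S ∩ T).Nonempty)
    {u v : V} (huv : G.Adj u v) (hu : u ∈ S) (hv : v ∈ T) : u ∈ T ∨ v ∈ S := by
  obtain ⟨x, hxS, hxT⟩ := hST
  obtain ⟨p, hp⟩ := exists_walk_support_subset_of_preconnected_induce hS hu hxS
  obtain ⟨q, hq⟩ := exists_walk_support_subset_of_preconnected_induce hT hxT hv
  have he := hG.mem_edges_of_adj huv (p.append q)
  rw [Walk.edges_append, List.mem_append] at he
  rcases he with he | he
  · exact Or.inr (hp v (p.snd_mem_support_of_mem_edges he))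
  · exact Or.inl (hq u (q.fst_mem_support_of_mem_edges he))

lemma Walk.exists_mem_support_inter {S T : Set V}
    (hST : ∀ u v, G.Adj u v → u ∈ S → v ∈ T → u ∈ T ∨ v ∈ S) :
    ∀ {a b : V} (w : G.Walk a b), a ∈ S → b ∈ T → (∀ t ∈ w.support, t ∈ S ∪ T) →
      ∃ t ∈ w.support, t ∈ S ∩ T
  | _, _, .nil, ha, hb, _ => ⟨_, by simp, ha, hb⟩
  | a, _, .cons (v := c) hac w, ha, hb, hw => by
    rcases hw c (by simp) with hc | hc
    · obtain ⟨t, ht, htST⟩ :=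
        exists_mem_support_inter hST w hc hb fun t ht => hw t (by simp [ht])
      exact ⟨t, by simp [ht], htST⟩
    · rcases hST a c hac ha hc with haT | hcS
      · exact ⟨a, by simp, ha, haT⟩
      · exact ⟨c, by simp, hcS, hc⟩

theorem IsAcyclic.inter_inter_nonempty (hG : G.IsAcyclic) {X Y Z : Set V}
    (hX : (G.induce X).Preconnected) (hY : (G.induce Y).Preconnected)
    (hZ : (G.induce Z).Preconnected) (hXY : (X ∩ Y).Nonempty) (hYZ : (Y ∩ Z).Nonempty)
    (hXZ : (X ∩ Z).Nonempty) : (X ∩ Y ∩ Z).Nonempty := by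
  classical
  obtain ⟨x, hxX, hxY⟩ := hXY
  obtain ⟨y, hyY, hyZ⟩ := hYZ
  obtain ⟨z, hzX, hzZ⟩ := hXZ
  obtain ⟨p, hp⟩ := exists_walk_support_subset_of_preconnected_induce hY hyY hxY
  obtain ⟨q, hq⟩ := exists_walk_support_subset_of_preconnected_induce hX hxX hzX
  let r : G.Path y z := (p.append q).toPath
  have hrXY : ∀ t ∈ (r : G.Walk y z).support, t ∈ Y ∪ X := fun t ht => by
    rcases (Walk.mem_support_append_iff p q).mp (Walk.support_toPath_subset_support _ ht) with
      h | h
    exacts [Or.inl (hp t h), Or.inr (hq t h)]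
  have hrZ := hG.support_subset_of_preconnected_induce hZ hyZ hzZ r
  obtain ⟨t, ht, htY, htX⟩ := Walk.exists_mem_support_inter
    (fun _ _ huv hu hv => hG.mem_or_mem_of_adj hY hX ⟨x, hxY, hxX⟩ huv hu hv) r.1 hyY hzX hrXY
  exact ⟨t, ⟨htX, htY⟩, hrZ t ht⟩

lemma induce_biUnion_Icc_connected (B : ℕ → Set V) {m k : ℕ} (hmk : m ≤ k)
    (hB : ∀ i ∈ Set.Icc m k, (G.induce (B i)).Connected)
    (hchain : ∀ i ∈ Set.Ico m k, (B i ∩ B (i + 1)).Nonempty) :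
    (G.induce (⋃ i ∈ Set.Icc m k, B i)).Connected := by
  induction k, hmk using Nat.le_induction with
  | base =>
    rw [Set.Icc_self, Set.biUnion_singleton]
    exact hB m ⟨le_rfl, le_rfl⟩
  | succ k hmk ih =>
    rw [← Set.insert_Icc_right_eq_Icc_add_one (by omega), Set.biUnion_insert, Set.union_comm]
    refine induce_union_connected
      (ih (fun i ⟨hmi, hik⟩ => hB i ⟨hmi, by omega⟩)
        (fun i ⟨hmi, hik⟩ => hchain i ⟨hmi, by omega⟩)).preconnected
      (hB (k + 1) ⟨by omega, le_rfl⟩).preconnected ?_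
    obtain ⟨x, hxk, hxk'⟩ := hchain k ⟨hmk, by omega⟩
    exact ⟨x, Set.mem_biUnion ⟨hmk, le_rfl⟩ hxk, hxk'⟩

end SimpleGraph

/-- Abstract form of Lemma 4.7: in a tree, if a connected set `A` meets `B 1` and `B n`
but misses the intermediate sets of a chain `B 1, …, B n` of consecutively intersecting
connected sets, then `B 1` meets `B n`. -/
theorem tree_chain_intersection {V : Type*} (G : SimpleGraph V) (hG : G.IsTree)
    (n : ℕ) (hn : 2 ≤ n) (A : Set V) (B : ℕ → Set V)
    (hA : (G.induce A).Connected)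
    (hB : ∀ i, 1 ≤ i → i ≤ n → (G.induce (B i)).Connected)
    (h1 : (A ∩ B 1).Nonempty) (h2 : (A ∩ B n).Nonempty)
    (h3 : ∀ i, 1 < i → i < n → A ∩ B i = ∅)
    (h4 : ∀ i, 1 ≤ i → i < n → (B i ∩ B (i + 1)).Nonempty) :
    (B 1 ∩ B n).Nonempty := by
  have hZ := SimpleGraph.induce_biUnion_Icc_connected (G := G) B hn
    (fun i ⟨h2i, hin⟩ => hB i (by omega) hin) (fun i ⟨h2i, hin⟩ => h4 i (by omega) hin)
  have h1Z : (B 1 ∩ ⋃ i ∈ Set.Icc 2 n, B i).Nonempty := by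
    obtain ⟨x, hx1, hx2⟩ := h4 1 le_rfl (by omega)
    exact ⟨x, hx1, Set.mem_biUnion ⟨le_rfl, hn⟩ hx2⟩
  have hAZ : (A ∩ ⋃ i ∈ Set.Icc 2 n, B i).Nonempty :=
    h2.mono (Set.inter_subset_inter_right _ (Set.subset_biUnion_of_mem ⟨hn, le_rfl⟩))
  obtain ⟨t, ⟨htA, ht1⟩, htZ⟩ := hG.isAcyclic.inter_inter_nonempty hA.preconnected
    (hB 1 le_rfl (by omega)).preconnected hZ.preconnected h1 h1Z hAZ
  obtain ⟨i, ⟨hi2, hin⟩, hti⟩ := Set.mem_iUnion₂.mp htZ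
  obtain rfl | hlt := hin.eq_or_lt
  · exact ⟨t, ht1, hti⟩
  · exact (Set.notMem_empty t ((h3 i (by omega) hlt).subset ⟨htA, hti⟩)).elim
end

section
/- Let M be a metric space, I = [0,1] the unit interval, and a : I → M a continuous map that is not constant. Then there exist a continuous, nondecreasing, surjective map σ : I → I and a continuous map b : I → M such that a = b ∘ σ and b is not constant on any nondegenerate subinterval of I. -/
/-!
For a dense sequence `(xₙ)` in `I`, the function `t ↦ ∑ₙ 2⁻ⁿ diam a([xₙ, t])` is continuous and
nondecreasing, and it takes the same value at `s ≤ t` exactly when `a` is constant on `[s, t]`.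
Rescaled to `[0, 1]` it is the reparametrization `σ`. Then `a` is constant on the fibres of the
quotient map `σ`, so it descends to a continuous `b`, and an interval on which `b` were constant
would pull back to an interval on which `a` is constant, which `σ` collapses to a point.
-/

open Set Metric Filter Topology

section DiamImageIcc

variable {α M : Type*} [LinearOrder α] [PseudoMetricSpace M] {a : α → M}

lemma diam_image_Icc_mono_right (hb : Bornology.IsBounded (range a)) (x : α) :
    Monotone fun t => diam (a '' Icc x t) := fun _ _ hst =>
  diam_mono (image_mono (Icc_subset_Icc_right hst)) (hb.subset (image_subset_range _ _))

lemma diam_image_Icc_le_add (hb : Bornology.IsBounded (range a)) (x s t : α) :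
    diam (a '' Icc x t) ≤ diam (a '' Icc x s) + diam (a '' uIcc s t) := by
  rcases le_total t s with hts | hst
  · exact le_add_of_le_of_nonneg (diam_image_Icc_mono_right hb x hts) diam_nonneg
  rw [uIcc_of_le hst]
  rcases le_total x s with hxs | hsx
  · calc diam (a '' Icc x t) = diam (a '' Icc x s ∪ a '' Icc s t) := by
          rw [← image_union, Icc_union_Icc_eq_Icc hxs hst]
      _ ≤ diam (a '' Icc x s) + dist (a s) (a s) + diam (a '' Icc s t) :=
          diam_union (mem_image_of_mem a ⟨hxs, le_rfl⟩) (mem_image_of_mem a ⟨le_rfl, hst⟩)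
      _ = diam (a '' Icc x s) + diam (a '' Icc s t) := by rw [dist_self, add_zero]
  · exact le_add_of_nonneg_of_le diam_nonneg
      (diam_mono (image_mono (Icc_subset_Icc_left hsx)) (hb.subset (image_subset_range _ _)))

lemma dist_diam_image_Icc_le (hb : Bornology.IsBounded (range a)) (x s t : α) :
    dist (diam (a '' Icc x s)) (diam (a '' Icc x t)) ≤ diam (a '' uIcc s t) := by
  rw [Real.dist_eq, abs_sub_le_iff]
  constructor
  · linarith [uIcc_comm s t ▸ diam_image_Icc_le_add hb x t s]
  · linarith [diam_image_Icc_le_add hb x s t]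

lemma diam_image_Icc_eq_of_forall_eq (hb : Bornology.IsBounded (range a)) (x : α) {s t : α}
    (hst : s ≤ t) (hc : ∀ u ∈ Icc s t, a u = a s) : diam (a '' Icc x s) = diam (a '' Icc x t) := by
  have hconst : diam (a '' uIcc s t) = 0 := by
    refine diam_subsingleton ((subsingleton_singleton (a := a s)).anti ?_)
    rintro _ ⟨u, hu, rfl⟩
    exact hc u (uIcc_of_le hst ▸ hu)
  refine (diam_image_Icc_mono_right hb x hst).antisymm ?_
  simpa [hconst] using diam_image_Icc_le_add hb x s t

end DiamImageIcc

section OrderTopology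

variable {α M : Type*} [LinearOrder α] [TopologicalSpace α] [OrderTopology α]

lemma tendsto_diam_image_uIcc [PseudoMetricSpace M] {a : α → M} {t : α}
    (ha : ContinuousAt a t) :
    Tendsto (fun s => diam (a '' uIcc s t)) (𝓝 t) (𝓝 0) := by
  refine Metric.tendsto_nhds.2 fun ε hε => ?_
  have hball : a ⁻¹' ball (a t) (ε / 3) ∈ 𝓝 t :=
    ha.preimage_mem_nhds (ball_mem_nhds _ (by positivity))
  filter_upwards [tendsto_smallSets_iff.1 (tendsto_id.uIcc tendsto_const_nhds) _ hball] with s hs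
  have hdiam : diam (a '' uIcc s t) ≤ 2 * (ε / 3) :=
    (diam_mono (image_subset_iff.2 hs) isBounded_ball).trans (diam_ball (by positivity))
  rw [Real.dist_0_eq_abs, abs_of_nonneg diam_nonneg]
  linarith

lemma continuous_diam_image_Icc [PseudoMetricSpace M] {a : α → M} (ha : Continuous a)
    (hb : Bornology.IsBounded (range a)) (x : α) :
    Continuous fun t => diam (a '' Icc x t) :=
  continuous_iff_continuousAt.2 fun t => tendsto_iff_dist_tendsto_zero.2 <|
    squeeze_zero (fun _ => dist_nonneg) (fun s => dist_diam_image_Icc_le hb x s t)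
      (tendsto_diam_image_uIcc ha.continuousAt)

lemma exists_diam_image_Icc_lt [DenselyOrdered α] [MetricSpace M] {a : α → M}
    (ha : Continuous a) (hb : Bornology.IsBounded (range a)) {x : ℕ → α} (hx : DenseRange x)
    {s t : α} (hc : ¬ ∀ u ∈ Icc s t, a u = a s) :
    ∃ n, diam (a '' Icc (x n) s) < diam (a '' Icc (x n) t) := by
  push Not at hc
  obtain ⟨u, hu, hau⟩ := hc
  have hsu : s < u := hu.1.lt_of_ne (by rintro rfl; exact hau rfl)
  set V := Ioo s u ∩ a ⁻¹' ball (a s) (dist (a u) (a s))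
  have hV : V.Nonempty := by
    have := nhdsGT_neBot_of_exists_gt ⟨u, hsu⟩
    refine nonempty_of_mem (inter_mem (Ioo_mem_nhdsGT hsu) (mem_nhdsWithin_of_mem_nhds ?_))
    exact ha.continuousAt.preimage_mem_nhds (ball_mem_nhds _ (dist_pos.2 hau))
  -- For `x n ∈ V`, `Icc (x n) s` is empty while `a (x n) ≠ a u` with `u ∈ Icc (x n) t`.
  obtain ⟨n, ⟨hsxn, hxnu⟩, hxn⟩ :=
    hx.exists_mem_open (isOpen_Ioo.inter (isOpen_ball.preimage ha)) hV
  refine ⟨n, ?_⟩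
  have hne : a (x n) ≠ a u := fun h => (mem_ball.1 hxn).ne (by rw [h])
  rw [Icc_eq_empty hsxn.not_ge, image_empty, diam_empty]
  exact (dist_pos.2 hne).trans_le (dist_le_diam_of_mem (hb.subset (image_subset_range _ _))
    (mem_image_of_mem a ⟨le_rfl, hxnu.le.trans hu.2⟩) (mem_image_of_mem a ⟨hxnu.le, hu.2⟩))

end OrderTopology

section ConstancyGauge

open TopologicalSpace

variable {α M : Type*} [LinearOrder α] [TopologicalSpace α] [SeparableSpace α] [Nonempty α]
  [MetricSpace M] {a : α → M}

/-- The level sets are the intervals on which `a` is constant: the term of a point `x` of the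
dense sequence vanishes for `t < x` (where `Icc x t = ∅`) and becomes positive as soon as `a`
moves after `x`. -/
noncomputable def constancyGauge (a : α → M) (t : α) : ℝ :=
  ∑' n, (1 / 2 : ℝ) ^ n * diam (a '' Icc (denseSeq α n) t)

lemma summable_constancyGauge (hb : Bornology.IsBounded (range a)) (t : α) :
    Summable fun n => (1 / 2 : ℝ) ^ n * diam (a '' Icc (denseSeq α n) t) :=
  (summable_geometric_two.mul_right (diam (range a))).of_nonneg_of_le
    (fun _ => mul_nonneg (by positivity) diam_nonneg)
    (fun _ => mul_le_mul_of_nonneg_left (diam_mono (image_subset_range _ _) hb) (by positivity))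

lemma monotone_constancyGauge (hb : Bornology.IsBounded (range a)) :
    Monotone (constancyGauge a) := fun _ _ hst =>
  (summable_constancyGauge hb _).tsum_le_tsum
    (fun n => mul_le_mul_of_nonneg_left (diam_image_Icc_mono_right hb _ hst) (by positivity))
    (summable_constancyGauge hb _)

lemma continuous_constancyGauge [OrderTopology α] (ha : Continuous a)
    (hb : Bornology.IsBounded (range a)) :
    Continuous (constancyGauge a) :=
  continuous_tsum (fun n => continuous_const.mul (continuous_diam_image_Icc ha hb _))
    (summable_geometric_two.mul_right (diam (range a))) fun n t => by
      rw [Real.norm_of_nonneg (mul_nonneg (by positivity) diam_nonneg)]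
      exact mul_le_mul_of_nonneg_left (diam_mono (image_subset_range _ _) hb) (by positivity)

lemma constancyGauge_eq_iff [OrderTopology α] [DenselyOrdered α] (ha : Continuous a)
    (hb : Bornology.IsBounded (range a)) {s t : α} (hst : s ≤ t) :
    constancyGauge a s = constancyGauge a t ↔ ∀ u ∈ Icc s t, a u = a s := by
  refine ⟨fun heq => ?_, fun hc => tsum_congr fun n => ?_⟩
  · by_contra hc
    obtain ⟨n, hn⟩ := exists_diam_image_Icc_lt ha hb (denseRange_denseSeq α) hc
    refine heq.not_lt ((summable_constancyGauge hb s).tsum_lt_tsum (i := n) (fun m => ?_)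
      (mul_lt_mul_of_pos_left hn (by positivity)) (summable_constancyGauge hb t))
    exact mul_le_mul_of_nonneg_left (diam_image_Icc_mono_right hb _ hst) (by positivity)
  · rw [diam_image_Icc_eq_of_forall_eq hb _ hst hc]

lemma apply_eq_of_constancyGauge_eq [OrderTopology α] [DenselyOrdered α] (ha : Continuous a)
    (hb : Bornology.IsBounded (range a)) {p q : α}
    (h : constancyGauge a p = constancyGauge a q) : a p = a q := by
  rcases le_total p q with hpq | hqp
  · exact ((constancyGauge_eq_iff ha hb hpq).1 h q ⟨hpq, le_rfl⟩).symm
  · exact (constancyGauge_eq_iff ha hb hqp).1 h.symm p ⟨hqp, le_rfl⟩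

end ConstancyGauge

open unitInterval in
lemma exists_reparam_unitInterval {f : I → ℝ} (hfc : Continuous f) (hfm : Monotone f)
    (h01 : f 0 < f 1) :
    ∃ φ : I → I, Continuous φ ∧ Monotone φ ∧ Function.Surjective φ ∧
      ∀ p q, φ p = φ q ↔ f p = f q := by
  have hmem : ∀ t, f t ∈ Icc (f 0) (f 1) := fun t => ⟨hfm nonneg', hfm le_one'⟩
  set e := iccHomeoI (f 0) (f 1) h01
  refine ⟨fun t => e ⟨f t, hmem t⟩, e.continuous.comp (hfc.subtype_mk hmem), fun p q hpq => ?_,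
    e.surjective.comp fun y => ?_, fun p q => by simp [e.injective.eq_iff]⟩
  · change (e _ : ℝ) ≤ e _
    simp only [e, iccHomeoI_apply_coe]
    gcongr
    exact hfm hpq
  · obtain ⟨t, ht⟩ := intermediate_value_univ 0 1 hfc y.2
    exact ⟨t, Subtype.ext ht⟩

lemma not_forall_eq_on_Icc_of_eq_comp {α β X : Type*} [LinearOrder α] [LinearOrder β]
    {σ : α → β} (hσm : Monotone σ) (hσs : Function.Surjective σ) {a : α → X} {b : β → X}
    (hab : a = b ∘ σ) (hσ : ∀ p q, p ≤ q → (∀ u ∈ Icc p q, a u = a p) → σ p = σ q)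
    {s t : β} (hst : s < t) : ¬ ∀ u ∈ Icc s t, b u = b s := by
  obtain ⟨p, rfl⟩ := hσs s
  obtain ⟨q, rfl⟩ := hσs t
  refine fun hb => hst.ne (hσ p q (hσm.reflect_lt hst).le fun u hu => ?_)
  simpa [hab] using hb (σ u) ⟨hσm hu.1, hσm hu.2⟩

/-- Existence of the minimal form of a non-constant path: every non-constant continuous
map `a : [0,1] → M` factors as `a = b ∘ σ` with `σ : [0,1] → [0,1]` continuous,
nondecreasing and surjective, and `b` continuous and not constant on any nondegenerate
subinterval. -/
theorem exists_minimal_form {M : Type*} [MetricSpace M] (a : unitInterval → M)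
    (ha : Continuous a) (hnc : ¬ ∀ s t : unitInterval, a s = a t) :
    ∃ (σ : unitInterval → unitInterval) (b : unitInterval → M),
      Continuous σ ∧ Monotone σ ∧ Function.Surjective σ ∧ Continuous b ∧
      a = b ∘ σ ∧
      ∀ s t : unitInterval, s < t → ¬ ∀ u ∈ Set.Icc s t, b u = b s := by
  have hb : Bornology.IsBounded (range a) := (isCompact_range ha).isBounded
  have hI : ∀ s : unitInterval, s ∈ Icc 0 1 :=
    fun _ => ⟨unitInterval.nonneg', unitInterval.le_one'⟩
  have h01 : constancyGauge a 0 < constancyGauge a 1 := by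
    refine (monotone_constancyGauge hb zero_le_one).lt_of_ne fun h => hnc fun s t => ?_
    have hc := (constancyGauge_eq_iff ha hb zero_le_one).1 h
    rw [hc s (hI s), hc t (hI t)]
  obtain ⟨σ, hσc, hσm, hσs, hσf⟩ :=
    exists_reparam_unitInterval (continuous_constancyGauge ha hb) (monotone_constancyGauge hb) h01
  have hq : IsQuotientMap (⟨σ, hσc⟩ : C(unitInterval, unitInterval)) :=
    .of_surjective_continuous hσs hσc
  have hfac : Function.FactorsThrough a σ := fun p q h =>
    apply_eq_of_constancyGauge_eq ha hb ((hσf p q).1 h)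
  have hab : a = hq.lift ⟨a, ha⟩ hfac ∘ σ :=
    (congrArg DFunLike.coe (hq.lift_comp ⟨a, ha⟩ hfac)).symm
  refine ⟨σ, hq.lift ⟨a, ha⟩ hfac, hσc, hσm, hσs, ContinuousMap.continuous _, hab,
    fun s t => not_forall_eq_on_Icc_of_eq_comp hσm hσs hab fun p q hpq hc => ?_⟩
  exact (hσf p q).2 ((constancyGauge_eq_iff ha hb hpq).2 hc)
end

section
/- Let M be a metric space and I = [0,1]. Let a, b : I → M be continuous maps, neither of which is constant on any nondegenerate subinterval of I. Suppose there exist continuous, nondecreasing, surjective maps σ, τ : I → I such that a ∘ σ = b ∘ τ. Then there exists a strictly increasing homeomorphism h : I → I such that a = b ∘ h. -/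
/-! If `a ∘ σ = b ∘ τ` and `σ x = σ x'` with `x ≤ x'`, then `σ`, hence `b ∘ τ`, is constant on
`[x, x']`; by the intermediate value theorem `τ` maps `[x, x']` onto `[τ x, τ x']`, so `b` is
constant there and minimality of `b` forces `τ x = τ x'`. Thus `τ` factors through `σ` and,
symmetrically, `σ` through `τ`; the two induced maps are mutually inverse monotone bijections
of `[0, 1]`, i.e. an order isomorphism, which is a homeomorphism. -/

open Function Set

def IsMinimalForm {γ M : Type*} [Preorder γ] (b : γ → M) : Prop :=
  ∀ s t : γ, s < t → ¬ ∀ u ∈ Icc s t, b u = b s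

theorem IsMinimalForm.factorsThrough {α β γ M : Type*}
    [ConditionallyCompleteLinearOrder α] [DenselyOrdered α] [TopologicalSpace α]
    [OrderTopology α] [PartialOrder β] [LinearOrder γ] [TopologicalSpace γ]
    [OrderClosedTopology γ] {a : β → M} {b : γ → M} (hb : IsMinimalForm b)
    {σ : α → β} {τ : α → γ} (hσm : Monotone σ) (hτc : Continuous τ) (hτm : Monotone τ)
    (heq : a ∘ σ = b ∘ τ) : τ.FactorsThrough σ := by
  suffices key : ∀ x x', x ≤ x' → σ x = σ x' → τ x = τ x' by
    intro x x' h
    rcases le_total x x' with hle | hle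
    exacts [key x x' hle h, (key x' x hle h.symm).symm]
  intro x x' hle hσ
  by_contra hne
  refine hb (τ x) (τ x') ((hτm hle).lt_of_ne hne) fun u hu => ?_
  obtain ⟨y, hy, rfl⟩ := intermediate_value_Icc hle hτc.continuousOn hu
  have hσy : σ y = σ x := le_antisymm (hσ ▸ hσm hy.2) (hσm hy.1)
  calc b (τ y) = a (σ y) := (congrFun heq y).symm
    _ = a (σ x) := by rw [hσy]
    _ = b (τ x) := congrFun heq x

theorem monotone_of_comp_eq_of_surjective {α β γ : Type*} [LinearOrder α] [PartialOrder β]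
    [Preorder γ] {σ : α → β} {τ : α → γ} {f : β → γ} (hσs : Surjective σ) (hσm : Monotone σ)
    (hτm : Monotone τ) (hf : ∀ x, f (σ x) = τ x) : Monotone f := by
  refine monotone_iff_forall_lt.mpr fun s s' hs => ?_
  obtain ⟨x, rfl⟩ := hσs s
  obtain ⟨x', rfl⟩ := hσs s'
  rw [hf, hf]
  exact hτm (hσm.reflect_lt hs).le

section OrderIsoOfFactorsThrough

variable {α β γ : Type*} {σ : α → β} {τ : α → γ}

theorem Function.FactorsThrough.apply_surjInv_apply (hσs : Surjective σ)
    (hστ : τ.FactorsThrough σ) (x : α) : τ (surjInv hσs (σ x)) = τ x :=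
  hστ (surjInv_eq hσs (σ x))

theorem leftInverse_comp_surjInv (hσs : Surjective σ) (hτs : Surjective τ)
    (hστ : τ.FactorsThrough σ) (hτσ : σ.FactorsThrough τ) :
    LeftInverse (σ ∘ surjInv hτs) (τ ∘ surjInv hσs) := fun s => by
  obtain ⟨x, rfl⟩ := hσs s
  simp only [comp_apply, hστ.apply_surjInv_apply, hτσ.apply_surjInv_apply]

variable [LinearOrder α] [PartialOrder β] [PartialOrder γ]
  (hσs : Surjective σ) (hσm : Monotone σ) (hτs : Surjective τ) (hτm : Monotone τ)
  (hστ : τ.FactorsThrough σ) (hτσ : σ.FactorsThrough τ)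

noncomputable def orderIsoOfFactorsThrough : β ≃o γ :=
  Equiv.toOrderIso
    ⟨τ ∘ surjInv hσs, σ ∘ surjInv hτs, leftInverse_comp_surjInv hσs hτs hστ hτσ,
      leftInverse_comp_surjInv hτs hσs hτσ hστ⟩
    (monotone_of_comp_eq_of_surjective hσs hσm hτm (hστ.apply_surjInv_apply hσs))
    (monotone_of_comp_eq_of_surjective hτs hτm hσm (hτσ.apply_surjInv_apply hτs))

theorem orderIsoOfFactorsThrough_apply (x : α) :
    orderIsoOfFactorsThrough hσs hσm hτs hτm hστ hτσ (σ x) = τ x :=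
  hστ.apply_surjInv_apply hσs x

end OrderIsoOfFactorsThrough

theorem minimal_forms_unique_general {M : Type*} (a b : unitInterval → M)
    (hma : ∀ s t : unitInterval, s < t → ¬ ∀ u ∈ Set.Icc s t, a u = a s)
    (hmb : ∀ s t : unitInterval, s < t → ¬ ∀ u ∈ Set.Icc s t, b u = b s)
    (σ τ : unitInterval → unitInterval)
    (hσc : Continuous σ) (hσm : Monotone σ) (hσs : Function.Surjective σ)
    (hτc : Continuous τ) (hτm : Monotone τ) (hτs : Function.Surjective τ)
    (heq : a ∘ σ = b ∘ τ) :
    ∃ h : unitInterval ≃ₜ unitInterval, StrictMono ⇑h ∧ a = b ∘ ⇑h := by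
  have hστ := IsMinimalForm.factorsThrough hmb hσm hτc hτm heq
  have hτσ := IsMinimalForm.factorsThrough hma hτm hσc hσm heq.symm
  set e := orderIsoOfFactorsThrough hσs hσm hτs hτm hστ hτσ
  have he : ∀ x, e (σ x) = τ x := orderIsoOfFactorsThrough_apply hσs hσm hτs hτm hστ hτσ
  refine ⟨e.toHomeomorph, e.strictMono, funext fun s => ?_⟩
  obtain ⟨x, rfl⟩ := hσs s
  exact (congrFun heq x).trans (congrArg b (he x).symm)

/-- Uniqueness of minimal forms: if two paths in minimal form (not constant on any
nondegenerate subinterval) admit continuous nondecreasing surjective reparametrizations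
making them equal, then they differ by a strictly increasing homeomorphism of `[0,1]`. -/
theorem minimal_forms_unique {M : Type*} [MetricSpace M] (a b : unitInterval → M)
    (ha : Continuous a) (hb : Continuous b)
    (hma : ∀ s t : unitInterval, s < t → ¬ ∀ u ∈ Set.Icc s t, a u = a s)
    (hmb : ∀ s t : unitInterval, s < t → ¬ ∀ u ∈ Set.Icc s t, b u = b s)
    (σ τ : unitInterval → unitInterval)
    (hσc : Continuous σ) (hσm : Monotone σ) (hσs : Function.Surjective σ)
    (hτc : Continuous τ) (hτm : Monotone τ) (hτs : Function.Surjective τ)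
    (heq : a ∘ σ = b ∘ τ) :
    ∃ h : unitInterval ≃ₜ unitInterval, StrictMono ⇑h ∧ a = b ∘ ⇑h :=
  minimal_forms_unique_general a b hma hmb σ τ hσc hσm hσs hτc hτm hτs heq
end
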